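/- arXiv:1801.07588 — 6 statements merged into one kernel-verified Lean document; each statement's English description precedes it below -/
import Mathlib

section
/- Let β > 0 and let p be a real number with p ≥ 1 and p ≥ 2β. Then B(p,β)^{1/p} ≤ [ (p/e) / ( ln(p/β) − ln ln(p/β) ) ] · exp( 1/ln(p/β) − β/p ). -/
open MeasureTheory ProbabilityTheory Real

/-- The Bell function `B(p, β) = e^{-β} ∑_{k=0}^∞ k^p β^k / k!`. -/
noncomputable def bellFn (p β : ℝ) : ℝ :=
  Real.exp (-β) * ∑' k : ℕ, (k : ℝ) ^ p * β ^ k / (Nat.factorial k : ℝ)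

lemma exp_tsum_aux (t : ℝ) : ∑' n : ℕ, t ^ n / (Nat.factorial n : ℝ) = Real.exp t := by
  rw [Real.exp_eq_exp_ℝ, NormedSpace.exp_eq_tsum_div]

/-- Pointwise key bound: `k^p ≤ C^p x^k` with `C = p / (e log x)`. -/
lemma key_pointwise (p x : ℝ) (hp : 0 < p) (hx : 0 < x) (hlx : 0 < Real.log x) (k : ℕ) :
    (k : ℝ) ^ p ≤ (p / (Real.exp 1 * Real.log x)) ^ p * x ^ k := by
  set C : ℝ := p / (Real.exp 1 * Real.log x) with hCdef
  have hC : 0 < C := div_pos hp (mul_pos (Real.exp_pos 1) hlx)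
  rcases Nat.eq_zero_or_pos k with rfl | hk
  · simp only [Nat.cast_zero]
    rw [Real.zero_rpow (ne_of_gt hp)]
    positivity
  · have hk1 : (1 : ℝ) ≤ (k : ℝ) := by exact_mod_cast hk
    have hk0 : (0 : ℝ) < (k : ℝ) := by linarith
    -- log inequality: log k ≤ k * log x / p - 1 + log p - log (log x)
    have h1 : Real.log ((k : ℝ) * Real.log x / p) ≤ (k : ℝ) * Real.log x / p - 1 :=
      Real.log_le_sub_one_of_pos (by positivity)
    have h2 : Real.log ((k : ℝ) * Real.log x / p)
        = Real.log k + Real.log (Real.log x) - Real.log p := by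
      rw [Real.log_div (by positivity) (ne_of_gt hp), Real.log_mul (ne_of_gt hk0) (ne_of_gt hlx)]
    have hlogk : Real.log k ≤ (k : ℝ) * Real.log x / p - 1 + Real.log p
        - Real.log (Real.log x) := by rw [h2] at h1; linarith
    have hlogC : Real.log C = Real.log p - 1 - Real.log (Real.log x) := by
      rw [hCdef, Real.log_div (ne_of_gt hp) (by positivity),
        Real.log_mul (ne_of_gt (Real.exp_pos 1)) (ne_of_gt hlx), Real.log_exp]
      ring
    have hkp : (k : ℝ) ^ p = Real.exp (Real.log k * p) := Real.rpow_def_of_pos hk0 p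
    have hCp : C ^ p = Real.exp (Real.log C * p) := Real.rpow_def_of_pos hC p
    have hxk : x ^ k = Real.exp ((k : ℝ) * Real.log x) := by
      rw [← Real.exp_log (pow_pos hx k), Real.log_pow]
    rw [hkp, hCp, hxk, ← Real.exp_add, Real.exp_le_exp, hlogC]
    have hpk : Real.log k * p ≤ ((k : ℝ) * Real.log x / p - 1 + Real.log p
        - Real.log (Real.log x)) * p := by
      exact mul_le_mul_of_nonneg_right hlogk (le_of_lt hp)
    have : ((k : ℝ) * Real.log x / p) * p = (k : ℝ) * Real.log x := by
      field_simp
    nlinarith [hpk]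

/-- For `β > 0` and real `p` with `p ≥ 1` and `p ≥ 2β`,
`B(p,β)^{1/p} ≤ [(p/e) / (ln(p/β) - ln ln(p/β))] · exp(1/ln(p/β) - β/p)`. -/
theorem stmt_4 (β p : ℝ) (hβ : 0 < β) (hp1 : 1 ≤ p) (hp2 : 2 * β ≤ p) :
    bellFn p β ^ (1 / p) ≤
      (p / Real.exp 1) / (Real.log (p / β) - Real.log (Real.log (p / β))) *
        Real.exp (1 / Real.log (p / β) - β / p) := by
  have hp0 : (0 : ℝ) < p := by linarith
  set L : ℝ := Real.log (p / β) with hLdef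
  have hpβ : (0 : ℝ) < p / β := div_pos hp0 hβ
  have hpβ2 : (2 : ℝ) ≤ p / β := (le_div_iff₀ hβ).mpr (by linarith)
  have hL0 : 0 < L := Real.log_pos (by linarith)
  have hD : 0 < L - Real.log L := by
    have := Real.log_le_sub_one_of_pos hL0; linarith
  set x : ℝ := (p / β) / L with hxdef
  have hx0 : 0 < x := div_pos hpβ hL0
  have hlx : Real.log x = L - Real.log L := by
    rw [hxdef, Real.log_div (ne_of_gt hpβ) (ne_of_gt hL0)]
  have hlx0 : 0 < Real.log x := by rw [hlx]; exact hD
  set C : ℝ := p / (Real.exp 1 * Real.log x) with hCdef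
  have hC : 0 < C := div_pos hp0 (mul_pos (Real.exp_pos 1) hlx0)
  -- summability and series comparison
  have hg : Summable (fun k : ℕ => C ^ p * ((x * β) ^ k / (Nat.factorial k : ℝ))) :=
    (Real.summable_pow_div_factorial (x * β)).mul_left _
  have hfle : ∀ k : ℕ, (k : ℝ) ^ p * β ^ k / (Nat.factorial k : ℝ)
      ≤ C ^ p * ((x * β) ^ k / (Nat.factorial k : ℝ)) := by
    intro k
    have h1 : (k : ℝ) ^ p ≤ C ^ p * x ^ k := key_pointwise p x hp0 hx0 hlx0 k
    have hfac : (0 : ℝ) < (Nat.factorial k : ℝ) := by positivity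
    rw [mul_pow, show C ^ p * (x ^ k * β ^ k / (Nat.factorial k : ℝ))
      = C ^ p * x ^ k * β ^ k / (Nat.factorial k : ℝ) by ring]
    gcongr
  have hfnn : ∀ k : ℕ, (0 : ℝ) ≤ (k : ℝ) ^ p * β ^ k / (Nat.factorial k : ℝ) := by
    intro k; positivity
  have hf : Summable (fun k : ℕ => (k : ℝ) ^ p * β ^ k / (Nat.factorial k : ℝ)) :=
    Summable.of_nonneg_of_le hfnn hfle hg
  have htsum : (∑' k : ℕ, (k : ℝ) ^ p * β ^ k / (Nat.factorial k : ℝ))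
      ≤ C ^ p * Real.exp (x * β) := by
    calc (∑' k : ℕ, (k : ℝ) ^ p * β ^ k / (Nat.factorial k : ℝ))
        ≤ ∑' k : ℕ, C ^ p * ((x * β) ^ k / (Nat.factorial k : ℝ)) :=
          Summable.tsum_le_tsum hfle hf hg
      _ = C ^ p * ∑' k : ℕ, ((x * β) ^ k / (Nat.factorial k : ℝ)) := tsum_mul_left
      _ = C ^ p * Real.exp (x * β) := by rw [exp_tsum_aux]
  have hbell : bellFn p β ≤ Real.exp (-β) * (C ^ p * Real.exp (x * β)) := by
    unfold bellFn
    exact mul_le_mul_of_nonneg_left htsum (le_of_lt (Real.exp_pos _))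
  have hbell_nn : 0 ≤ bellFn p β := by
    unfold bellFn
    exact mul_nonneg (le_of_lt (Real.exp_pos _)) (tsum_nonneg hfnn)
  have hxβ : x * β = p / L := by
    rw [hxdef]; field_simp
  have hstep : bellFn p β ^ (1 / p) ≤
      (Real.exp (-β) * (C ^ p * Real.exp (x * β))) ^ (1 / p) :=
    Real.rpow_le_rpow hbell_nn hbell (by positivity)
  refine hstep.trans_eq ?_
  have hrw : Real.exp (-β) * (C ^ p * Real.exp (x * β))
      = C ^ p * Real.exp ((x * β - β)) := by
    rw [mul_left_comm, ← Real.exp_add]; ring_nf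
  rw [hrw, Real.mul_rpow (by positivity) (le_of_lt (Real.exp_pos _))]
  have hCp1 : (C ^ p) ^ (1 / p) = C := by
    rw [← Real.rpow_mul (le_of_lt hC), mul_one_div, div_self (ne_of_gt hp0), Real.rpow_one]
  have hexp1 : Real.exp (x * β - β) ^ (1 / p) = Real.exp (1 / L - β / p) := by
    rw [← Real.exp_mul]
    congr 1
    rw [hxβ]
    field_simp
  rw [hCp1, hexp1, hCdef, hlx, div_div]
end

section
/- For every β > 0 there exists a constant C1 = C1(β) ∈ (0,∞) such that for all real p with p ≥ 2 and p ≥ e^e · β one has B(p,β)^{1/p} ≤ ( p / (e · ln(p/β)) ) · ( 1 + C1 · ln ln(p/β) / ln(p/β) ). -/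
open MeasureTheory ProbabilityTheory Real

private lemma tsum_exp_aux (x : ℝ) :
    ∑' k : ℕ, x ^ k / (Nat.factorial k : ℝ) = Real.exp x := by
  rw [Real.exp_eq_exp_ℝ, NormedSpace.exp_eq_tsum_div]

/-- Pointwise bound `x^p ≤ (p/(e t))^p e^{t x}`. -/
private lemma pointwise_bound (p t x : ℝ) (hp : 0 < p) (ht : 0 < t) (hx : 0 ≤ x) :
    x ^ p ≤ (p / (Real.exp 1 * t)) ^ p * Real.exp (t * x) := by
  rcases eq_or_lt_of_le hx with h | h
  · rw [← h, Real.zero_rpow hp.ne']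
    positivity
  · have hb : (0:ℝ) < p / (Real.exp 1 * t) := by positivity
    rw [Real.rpow_def_of_pos h, Real.rpow_def_of_pos hb, ← Real.exp_add]
    apply Real.exp_le_exp.2
    have hq : (0:ℝ) < t * x / p := by positivity
    have key : Real.log (t * x / p * Real.exp 1) ≤ t * x / p := by
      have h1 : Real.log (t * x / p) ≤ t * x / p - 1 :=
        Real.log_le_sub_one_of_pos hq
      rw [Real.log_mul hq.ne' (Real.exp_ne_zero 1), Real.log_exp]
      linarith
    have hlogs : Real.log (t * x / p * Real.exp 1) =
        Real.log x - Real.log (p / (Real.exp 1 * t)) := by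
      rw [show t * x / p * Real.exp 1 = x / (p / (Real.exp 1 * t)) by
        field_simp]
      rw [Real.log_div h.ne' hb.ne']
    rw [hlogs] at key
    have := mul_le_mul_of_nonneg_left key hp.le
    have h2 : p * (t * x / p) = t * x := by field_simp
    nlinarith

set_option maxHeartbeats 1000000 in
/-- MGF bound on the Bell function. -/
private lemma bell_le (p β t : ℝ) (hp : 0 < p) (hβ : 0 < β) (ht : 0 < t) :
    bellFn p β ≤ (p / (Real.exp 1 * t)) ^ p * Real.exp (β * (Real.exp t - 1)) := by
  set C : ℝ := p / (Real.exp 1 * t) with hC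
  have hCpos : (0:ℝ) < C := by positivity
  have hCp : (0:ℝ) ≤ C ^ p := Real.rpow_nonneg hCpos.le p
  have hsum2 : Summable (fun k : ℕ => (β * Real.exp t) ^ k / (Nat.factorial k : ℝ)) :=
    Real.summable_pow_div_factorial _
  have hle : ∀ k : ℕ, (k : ℝ) ^ p * β ^ k / (Nat.factorial k : ℝ) ≤
      C ^ p * ((β * Real.exp t) ^ k / (Nat.factorial k : ℝ)) := by
    intro k
    have h1 : (k : ℝ) ^ p ≤ C ^ p * Real.exp (t * k) :=
      pointwise_bound p t k hp ht (Nat.cast_nonneg k)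
    have h2 : C ^ p * ((β * Real.exp t) ^ k / (Nat.factorial k : ℝ)) =
        C ^ p * Real.exp (t * k) * β ^ k / (Nat.factorial k : ℝ) := by
      rw [mul_pow, mul_comm t (k:ℝ), ← Real.exp_nat_mul]
      ring
    rw [h2]
    have hfac : (0:ℝ) < (Nat.factorial k : ℝ) := by positivity
    apply div_le_div_of_nonneg_right _ hfac.le |>.trans_eq rfl
    exact mul_le_mul_of_nonneg_right h1 (by positivity)
  have hsum1 : Summable (fun k : ℕ => (k : ℝ) ^ p * β ^ k / (Nat.factorial k : ℝ)) := by
    apply Summable.of_nonneg_of_le (fun k => by positivity) hle (hsum2.mul_left _)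
  have hts : (∑' k : ℕ, (k : ℝ) ^ p * β ^ k / (Nat.factorial k : ℝ)) ≤
      C ^ p * Real.exp (β * Real.exp t) := by
    calc (∑' k : ℕ, (k : ℝ) ^ p * β ^ k / (Nat.factorial k : ℝ))
        ≤ ∑' k : ℕ, C ^ p * ((β * Real.exp t) ^ k / (Nat.factorial k : ℝ)) :=
          Summable.tsum_le_tsum hle hsum1 (hsum2.mul_left _)
      _ = C ^ p * Real.exp (β * Real.exp t) := by
          rw [tsum_mul_left, tsum_exp_aux]
  have hfin : C ^ p * Real.exp (β * (Real.exp t - 1)) =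
      Real.exp (-β) * (C ^ p * Real.exp (β * Real.exp t)) := by
    rw [show β * (Real.exp t - 1) = β * Real.exp t + (-β) by ring, Real.exp_add]
    ring
  rw [bellFn, hfin]
  have hexp0 : (0:ℝ) ≤ Real.exp (-β) := (Real.exp_pos (-β)).le
  exact mul_le_mul_of_nonneg_left hts hexp0

/-- For every `β > 0` there is a constant `C1 = C1(β) ∈ (0,∞)` such that for all
real `p` with `p ≥ 2` and `p ≥ e^e β`,
`B(p,β)^{1/p} ≤ (p / (e ln(p/β))) · (1 + C1 · ln ln(p/β) / ln(p/β))`. -/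
theorem stmt_5 (β : ℝ) (hβ : 0 < β) :
    ∃ C1 : ℝ, 0 < C1 ∧ ∀ p : ℝ, 2 ≤ p → Real.exp (Real.exp 1) * β ≤ p →
      bellFn p β ^ (1 / p) ≤
        p / (Real.exp 1 * Real.log (p / β)) *
          (1 + C1 * Real.log (Real.log (p / β)) / Real.log (p / β)) := by
  refine ⟨7, by norm_num, fun p hp2 hpe => ?_⟩
  have hp : (0:ℝ) < p := by linarith
  have hpβ : (0:ℝ) < p / β := by positivity
  have he1 : (2.5:ℝ) < Real.exp 1 := by
    have := Real.exp_one_gt_d9; norm_num at this ⊢; linarith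
  have he2 : Real.exp 1 < 3 := by
    have := Real.exp_one_lt_d9; norm_num at this ⊢; linarith
  set L : ℝ := Real.log (p / β) with hLdef
  have hLe : Real.exp 1 ≤ L := by
    rw [hLdef, Real.le_log_iff_exp_le hpβ]
    rw [le_div_iff₀ hβ]; linarith [hpe]
  have hL0 : (0:ℝ) < L := lt_of_lt_of_le (by linarith) hLe
  have hlogL1 : 1 ≤ Real.log L := by
    rw [Real.le_log_iff_exp_le hL0]; exact hLe
  have hlogL0 : (0:ℝ) < Real.log L := by linarith
  -- log L ≤ L / e
  have hu : Real.log L ≤ L / Real.exp 1 := by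
    have h1 : Real.log (L / Real.exp 1) ≤ L / Real.exp 1 - 1 :=
      Real.log_le_sub_one_of_pos (by positivity)
    rw [Real.log_div hL0.ne' (Real.exp_ne_zero 1), Real.log_exp] at h1
    linarith
  have hlogLltL : Real.log L < L := by
    have : L / Real.exp 1 < L := by
      rw [div_lt_iff₀ (by linarith)]
      nlinarith
    linarith
  set t : ℝ := L - Real.log L with htdef
  have ht : (0:ℝ) < t := by rw [htdef]; linarith
  -- exp t = (p/β)/L
  have hexpt : Real.exp t = p / β / L := by
    rw [htdef, Real.exp_sub, Real.exp_log hpβ, Real.exp_log hL0]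
  have hβet : β * (Real.exp t - 1) ≤ p / L := by
    rw [hexpt]
    have : β * (p / β / L - 1) = p / L - β := by field_simp
    rw [this]; linarith
  -- bellFn bound
  have hbell : bellFn p β ≤ (p / (Real.exp 1 * t)) ^ p * Real.exp (p / L) := by
    refine (bell_le p β t hp hβ ht).trans ?_
    have : Real.exp (β * (Real.exp t - 1)) ≤ Real.exp (p / L) :=
      Real.exp_le_exp.2 hβet
    exact mul_le_mul_of_nonneg_left this (Real.rpow_nonneg (by positivity) p)
  have hbell0 : 0 ≤ bellFn p β := by
    apply mul_nonneg (Real.exp_pos _).le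
    apply tsum_nonneg
    intro k; positivity
  have hC : (0:ℝ) < p / (Real.exp 1 * t) := by positivity
  -- raise to 1/p
  have hstep : bellFn p β ^ (1 / p) ≤ p / (Real.exp 1 * t) * Real.exp (1 / L) := by
    have h1 : bellFn p β ^ (1 / p) ≤
        ((p / (Real.exp 1 * t)) ^ p * Real.exp (p / L)) ^ (1 / p) :=
      Real.rpow_le_rpow hbell0 hbell (by positivity)
    refine h1.trans_eq ?_
    rw [Real.mul_rpow (Real.rpow_nonneg hC.le p) (Real.exp_pos _).le,
      ← Real.rpow_mul hC.le]
    rw [show (p : ℝ) * (1 / p) = 1 by field_simp, Real.rpow_one]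
    rw [← Real.exp_mul, show p / L * (1 / p) = 1 / L by field_simp]
  refine hstep.trans ?_
  -- key scalar inequality: L * exp(1/L) ≤ t * (1 + 7 * log L / L)
  have hu' : Real.log L / L ≤ 1 / Real.exp 1 := by
    rw [div_le_div_iff₀ hL0 (by linarith)]
    calc Real.log L * Real.exp 1 ≤ (L / Real.exp 1) * Real.exp 1 := by
          exact mul_le_mul_of_nonneg_right hu (by linarith)
      _ = L := by field_simp
      _ = 1 * L := by ring
  set u : ℝ := Real.log L / L with hudef
  have hu0 : 0 < u := by positivity
  have hu04 : u ≤ 0.4 := by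
    refine hu'.trans ?_
    rw [div_le_iff₀ (by linarith)]; linarith
  have h1Lu : 1 / L ≤ u := by
    rw [hudef, div_le_div_iff₀ hL0 hL0]
    nlinarith
  have heu3 : Real.exp u ≤ 1 + 3 * u := by
    have h1 : 1 + (-u) ≤ Real.exp (-u) := by linarith [Real.add_one_le_exp (-u)]
    have h2 : Real.exp (-u) * Real.exp u = 1 := by
      rw [← Real.exp_add]; norm_num
    have h3 : Real.exp u ≤ Real.exp 1 := Real.exp_le_exp.2 (by linarith)
    nlinarith [Real.exp_pos u]
  have hkey : L * Real.exp (1 / L) ≤ t * (1 + 7 * u) := by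
    have hLu : L * u = Real.log L := by rw [hudef]; field_simp
    have h1 : Real.exp (1 / L) ≤ Real.exp u := Real.exp_le_exp.2 h1Lu
    have h2 : 1 + 3 * u ≤ (1 - u) * (1 + 7 * u) := by nlinarith
    have h3 : t * (1 + 7 * u) = L * ((1 - u) * (1 + 7 * u)) := by
      rw [htdef, ← hLu]; ring
    rw [h3]
    calc L * Real.exp (1 / L) ≤ L * Real.exp u :=
          mul_le_mul_of_nonneg_left h1 hL0.le
      _ ≤ L * (1 + 3 * u) := mul_le_mul_of_nonneg_left heu3 hL0.le
      _ ≤ L * ((1 - u) * (1 + 7 * u)) := mul_le_mul_of_nonneg_left h2 hL0.le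
  -- finish by cross-multiplication
  have hRHS : p / (Real.exp 1 * L) * (1 + 7 * Real.log L / L)
      = p / (Real.exp 1 * L) * (1 + 7 * u) := by
    rw [hudef]; ring_nf
  show p / (Real.exp 1 * t) * Real.exp (1 / L) ≤
      p / (Real.exp 1 * L) * (1 + 7 * Real.log L / L)
  rw [hRHS]
  rw [div_mul_eq_mul_div, div_mul_eq_mul_div,
    div_le_div_iff₀ (by positivity) (by positivity)]
  have h := mul_le_mul_of_nonneg_left hkey
    (show (0:ℝ) ≤ p * Real.exp 1 by positivity)
  calc p * Real.exp (1 / L) * (Real.exp 1 * L)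
      = p * Real.exp 1 * (L * Real.exp (1 / L)) := by ring
    _ ≤ p * Real.exp 1 * (t * (1 + 7 * u)) := h
    _ = p * (1 + 7 * u) * (Real.exp 1 * t) := by ring
end

section
/- For every β > 0 there exists a constant C2 = C2(β) ∈ (0,∞) such that for all real p with p ≥ 2 and p ≥ e^e · β one has B(p,β)^{1/p} ≥ ( p / (e · ln(p/β)) ) · ( 1 − C2 · ln ln(p/β) / ln(p/β) ). -/
open MeasureTheory ProbabilityTheory Real

set_option maxHeartbeats 1000000

lemma bell_summable (p β : ℝ) (hβ : 0 < β) (hp : 1 ≤ p) :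
    Summable (fun k : ℕ => (k : ℝ) ^ p * β ^ k / (Nat.factorial k : ℝ)) := by
  set m : ℕ := ⌈p⌉₊ with hm
  have hpm : p ≤ (m : ℝ) := Nat.le_ceil p
  have hm1 : 1 ≤ m := by
    have := hp.trans hpm
    exact_mod_cast Nat.one_le_cast.mp (by exact_mod_cast this)
  have hs2 : Summable (fun k : ℕ => (2 * β) ^ k / (Nat.factorial k : ℝ)) :=
    Real.summable_pow_div_factorial (2 * β)
  set T : ℝ := ∑' k : ℕ, (2 * β) ^ k / (Nat.factorial k : ℝ) with hT
  have hTle : ∀ k : ℕ, (2 * β) ^ k / (Nat.factorial k : ℝ) ≤ T := by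
    intro k
    exact Summable.le_tsum hs2 k (fun j _ => by positivity)
  have hgeom : Summable (fun k : ℕ => T * ((k : ℝ) ^ m * (1 / 2 : ℝ) ^ k)) :=
    (summable_pow_mul_geometric_of_norm_lt_one m (r := (1/2 : ℝ))
      (by rw [Real.norm_eq_abs]; rw [abs_of_pos]; norm_num; norm_num)).mul_left T
  apply Summable.of_nonneg_of_le (fun k => by positivity) _ hgeom
  intro k
  rcases Nat.eq_zero_or_pos k with hk | hk
  · subst hk
    simp [Real.zero_rpow (by linarith : p ≠ 0), zero_pow (by omega : m ≠ 0)]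
  · have hk1 : (1 : ℝ) ≤ (k : ℝ) := by exact_mod_cast hk
    have h1 : (k : ℝ) ^ p ≤ (k : ℝ) ^ (m : ℕ) := by
      calc (k : ℝ) ^ p ≤ (k : ℝ) ^ (m : ℝ) := rpow_le_rpow_of_exponent_le hk1 hpm
        _ = (k : ℝ) ^ (m : ℕ) := rpow_natCast _ _
    have h2 : β ^ k / (Nat.factorial k : ℝ) ≤ (1 / 2 : ℝ) ^ k * T := by
      have : β ^ k = (1 / 2 : ℝ) ^ k * (2 * β) ^ k := by
        rw [← mul_pow]; ring_nf
      rw [this, mul_div_assoc]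
      exact mul_le_mul_of_nonneg_left (hTle k) (by positivity)
    calc (k : ℝ) ^ p * β ^ k / (Nat.factorial k : ℝ)
        = (k : ℝ) ^ p * (β ^ k / (Nat.factorial k : ℝ)) := by ring
      _ ≤ (k : ℝ) ^ (m : ℕ) * ((1 / 2 : ℝ) ^ k * T) := by
          apply mul_le_mul h1 h2 (by positivity) (by positivity)
      _ = T * ((k : ℝ) ^ m * (1 / 2 : ℝ) ^ k) := by ring

lemma bell_term_le (p β : ℝ) (hβ : 0 < β) (hp : 1 ≤ p) (n : ℕ) :
    Real.exp (-β) * ((n : ℝ) ^ p * β ^ n / (Nat.factorial n : ℝ)) ≤ bellFn p β := by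
  apply mul_le_mul_of_nonneg_left _ (le_of_lt (exp_pos _))
  exact Summable.le_tsum (bell_summable p β hβ hp) n (fun j _ => by positivity)

lemma bell_nonneg (p β : ℝ) (hβ : 0 < β) : 0 ≤ bellFn p β := by
  apply mul_nonneg (le_of_lt (exp_pos _))
  exact tsum_nonneg (fun k => by positivity)

lemma bell_lower (p β : ℝ) (hβ : 0 < β) (hp : 1 ≤ p) (n : ℕ) (hn : 1 ≤ n) :
    (n : ℝ) * Real.exp ((-β - (n : ℝ) * (Real.log n - Real.log β)) / p) ≤
      bellFn p β ^ (1 / p) := by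
  have hp0 : 0 < p := by linarith
  have hn0 : (0 : ℝ) < (n : ℝ) := by exact_mod_cast hn
  set c : ℝ := -β - (n : ℝ) * (Real.log n - Real.log β) with hc
  have hfact : (Nat.factorial n : ℝ) ≤ (n : ℝ) ^ n := by
    exact_mod_cast Nat.factorial_le_pow n
  have h1 : (n : ℝ) ^ p * Real.exp c ≤
      Real.exp (-β) * ((n : ℝ) ^ p * β ^ n / (Nat.factorial n : ℝ)) := by
    have hbn : Real.exp ((n : ℝ) * (Real.log β - Real.log n)) = β ^ n / (n:ℝ) ^ n := by
      rw [mul_comm, Real.exp_mul, Real.exp_sub, Real.exp_log hβ, Real.exp_log hn0,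
        div_rpow (le_of_lt hβ) (le_of_lt hn0)]
      · norm_num [Real.rpow_natCast, Real.div_rpow]
    have hec : Real.exp c = Real.exp (-β) * (β ^ n / (n:ℝ)^n) := by
      rw [← hbn, ← Real.exp_add, hc]; ring_nf
    rw [hec]
    have : β ^ n / (n:ℝ)^n ≤ β ^ n / (Nat.factorial n : ℝ) := by
      apply div_le_div_of_nonneg_left (by positivity) (by positivity) hfact
    calc (n:ℝ)^p * (Real.exp (-β) * (β ^ n / (n:ℝ)^n))
        ≤ (n:ℝ)^p * (Real.exp (-β) * (β ^ n / (Nat.factorial n : ℝ))) := by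
          apply mul_le_mul_of_nonneg_left _ (by positivity)
          exact mul_le_mul_of_nonneg_left this (by positivity)
      _ = Real.exp (-β) * ((n : ℝ) ^ p * β ^ n / (Nat.factorial n : ℝ)) := by ring
  have h2 : (n : ℝ) ^ p * Real.exp c ≤ bellFn p β := h1.trans (bell_term_le p β hβ hp n)
  have h3 : ((n : ℝ) ^ p * Real.exp c) ^ (1/p) ≤ bellFn p β ^ (1/p) :=
    Real.rpow_le_rpow (by positivity) h2 (by positivity)
  have h4 : ((n : ℝ) ^ p * Real.exp c) ^ (1/p) = (n : ℝ) * Real.exp (c / p) := by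
    rw [Real.mul_rpow (by positivity) (by positivity),
      ← Real.rpow_mul (le_of_lt hn0), mul_one_div, div_self (ne_of_gt hp0),
      Real.rpow_one, ← Real.exp_mul, mul_one_div]
  rw [← h4] at *
  exact h3

/-- For every `β > 0` there is a constant `C2 = C2(β) ∈ (0,∞)` such that for all
real `p` with `p ≥ 2` and `p ≥ e^e β`,
`B(p,β)^{1/p} ≥ (p / (e ln(p/β))) · (1 - C2 · ln ln(p/β) / ln(p/β))`. -/
theorem stmt_6 (β : ℝ) (hβ : 0 < β) :
    ∃ C2 : ℝ, 0 < C2 ∧ ∀ p : ℝ, 2 ≤ p → Real.exp (Real.exp 1) * β ≤ p →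
      p / (Real.exp 1 * Real.log (p / β)) *
          (1 - C2 * Real.log (Real.log (p / β)) / Real.log (p / β)) ≤
        bellFn p β ^ (1 / p) := by
  refine ⟨6 / β + 2, by positivity, ?_⟩
  intro p hp2 hpβ
  have hp0 : (0 : ℝ) < p := by linarith
  set L : ℝ := Real.log (p / β) with hLdef
  have hee : Real.exp (Real.exp 1) ≤ p / β := by
    rw [le_div_iff₀ hβ]; linarith
  have hL_e : Real.exp 1 ≤ L := by
    rw [hLdef, ← Real.log_exp (Real.exp 1)]
    exact Real.log_le_log (exp_pos _) hee
  have he1 : (2 : ℝ) < Real.exp 1 := by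
    have := Real.add_one_le_exp 1
    nlinarith [Real.exp_one_gt_d9]
  have hL0 : (0 : ℝ) < L := by linarith
  have hlogL : 1 ≤ Real.log L := by
    rw [← Real.log_exp 1]
    exact Real.log_le_log (exp_pos _) hL_e
  have hlogL_le : Real.log L ≤ L := by
    have := Real.log_le_sub_one_of_pos hL0; linarith
  have hLsplit : L = Real.log p - Real.log β := Real.log_div (ne_of_gt hp0) (ne_of_gt hβ)
  have hβlep : β < p := by
    have hE : (1:ℝ) < Real.exp (Real.exp 1) := by
      have := Real.add_one_le_exp (Real.exp 1)
      have := Real.exp_pos 1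
      linarith
    nlinarith
  have hsq : L ≤ 2 * Real.sqrt (p / β) := by
    have h1 : Real.log (Real.sqrt (p / β)) = Real.log (p / β) / 2 :=
      Real.log_sqrt (by positivity)
    have h2 : Real.log (Real.sqrt (p / β)) ≤ Real.sqrt (p / β) - 1 :=
      Real.log_le_sub_one_of_pos (Real.sqrt_pos.mpr (by positivity))
    rw [hLdef]; nlinarith
  have hsq2 : Real.sqrt (p / β) ^ 2 = p / β := Real.sq_sqrt (by positivity : (0:ℝ) ≤ p / β)
  have hsq0 : 0 ≤ Real.sqrt (p / β) := Real.sqrt_nonneg _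
  by_cases hcase : p < L
  · -- small case: the right-hand factor is nonpositive
    have hsp : Real.sqrt p ^ 2 = p := Real.sq_sqrt hp0.le
    have hlogp : Real.log p ≤ p / 2 := by
      have h1 : Real.log (Real.sqrt p) = Real.log p / 2 := Real.log_sqrt hp0.le
      have h2 : Real.log (Real.sqrt p) ≤ Real.sqrt p - 1 :=
        Real.log_le_sub_one_of_pos (Real.sqrt_pos.mpr hp0)
      nlinarith [sq_nonneg (Real.sqrt p - 2)]
    have hlogβ : -Real.log β ≤ 1 / β - 1 := by
      have := Real.log_le_sub_one_of_pos (show (0:ℝ) < 1/β by positivity)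
      rw [Real.log_div one_ne_zero (ne_of_gt hβ), Real.log_one] at this
      linarith
    have hb3 : (0:ℝ) ≤ 1/β := by positivity
    have hb2 : (6:ℝ)/β = 6*(1/β) := by ring
    have hLsmall : L ≤ 6 / β + 2 := by
      rw [hb2]
      -- L = log p - log β ≤ p/2 - log β, and p < L gives p/2 < -log β
      have h1 : p / 2 < -Real.log β := by
        rw [hLsplit] at hcase; linarith
      linarith [hLsplit, hlogp, hlogβ]
    have hfac : 1 - (6 / β + 2) * Real.log L / L ≤ 0 := by
      rw [sub_nonpos, le_div_iff₀ hL0]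
      calc (1:ℝ) * L = L := one_mul L
        _ ≤ (6 / β + 2) * 1 := by linarith
        _ ≤ (6 / β + 2) * Real.log L := by
            apply mul_le_mul_of_nonneg_left hlogL (by positivity)
    have hrhs : p / (Real.exp 1 * L) * (1 - (6 / β + 2) * Real.log L / L) ≤ 0 :=
      mul_nonpos_of_nonneg_of_nonpos (by positivity) hfac
    exact hrhs.trans (Real.rpow_nonneg (bell_nonneg p β hβ) _)
  · push_neg at hcase  -- L ≤ p
    set n : ℕ := ⌊p / L⌋₊ with hndef
    have hpL1 : (1 : ℝ) ≤ p / L := (one_le_div hL0).mpr hcase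
    have hn1 : 1 ≤ n := Nat.le_floor (by exact_mod_cast hpL1)
    have hn0 : (0:ℝ) < (n:ℝ) := by exact_mod_cast hn1
    have hnle : (n : ℝ) ≤ p / L := Nat.floor_le (by positivity)
    have hnge : p / L - 1 ≤ (n : ℝ) := by
      have := Nat.lt_floor_add_one (p / L); linarith
    have key := bell_lower p β hβ (by linarith) n hn1
    -- exponent bound
    have hD : (n:ℝ) * (Real.log n - Real.log β) ≤ p / L * (L - Real.log L) := by
      rcases le_or_gt (Real.log n - Real.log β) 0 with h | h
      · have h1 : (n:ℝ) * (Real.log n - Real.log β) ≤ 0 :=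
          mul_nonpos_of_nonneg_of_nonpos hn0.le h
        have h2 : (0:ℝ) ≤ p / L * (L - Real.log L) := by
          apply mul_nonneg (by positivity); linarith
        linarith
      · have hlogn : Real.log n ≤ Real.log p - Real.log L := by
          rw [← Real.log_div (ne_of_gt hp0) (ne_of_gt hL0)]
          exact Real.log_le_log hn0 hnle
        have hD2 : Real.log n - Real.log β ≤ L - Real.log L := by
          linarith [hLsplit]
        exact mul_le_mul hnle hD2 h.le (by positivity)
    have hnDp : (n:ℝ) * (Real.log n - Real.log β) ≤ p := by
      have h2 : p / L * (L - Real.log L) ≤ p * 1 := by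
        have he : p / L * (L - Real.log L) = p * ((L - Real.log L)/L) := by
          field_simp
        rw [he]
        apply mul_le_mul_of_nonneg_left _ hp0.le
        rw [div_le_one hL0]; linarith
      linarith
    have hexp : -β / p - 1 ≤ (-β - (n:ℝ) * (Real.log n - Real.log β)) / p := by
      have h3 : (-β - p)/p ≤ (-β - (n:ℝ) * (Real.log n - Real.log β))/p := by
        gcongr <;> linarith
      have h4 : (-β - p)/p = -β/p - 1 := by field_simp
      linarith
    have hmono : Real.exp (-β / p - 1) ≤
        Real.exp ((-β - (n:ℝ) * (Real.log n - Real.log β)) / p) :=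
      Real.exp_le_exp.mpr hexp
    have hexp_lb : Real.exp (-1 : ℝ) * (1 - β / p) ≤ Real.exp (-β / p - 1) := by
      have h1 : Real.exp (-β/p - 1) = Real.exp (-1:ℝ) * Real.exp (-β/p) := by
        rw [← Real.exp_add]; ring_nf
      have hng : -β/p = -(β/p) := neg_div _ _
      have h2 : 1 - β / p ≤ Real.exp (-β / p) := by
        have := Real.add_one_le_exp (-β/p); rw [hng] at this ⊢; linarith
      rw [h1]
      exact mul_le_mul_of_nonneg_left h2 (exp_pos _).le
    -- core numeric inequality
    have hcore : L*L + β*L ≤ p * (6/β + 2) := by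
      set s : ℝ := Real.sqrt (p/β) with hs
      have hsq2' : β * s ^ 2 = p := by
        rw [hs, hsq2]; field_simp
      have h1 : β * (L*L) ≤ 4*p := by
        nlinarith [mul_nonneg (mul_nonneg hβ.le
          (by linarith : (0:ℝ) ≤ 2*s - L)) (by linarith : (0:ℝ) ≤ 2*s + L), hsq2']
      have hbs : β * s ≤ p := by
        have hb2 : β * (β * s ^ 2) = β * p := by rw [hsq2']
        nlinarith [sq_nonneg (β * s - p), hb2, hβlep, hp0, hβ]
      have h2 : β * L ≤ 2*p := by
        nlinarith [mul_le_mul_of_nonneg_left hsq hβ.le, hbs]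
      have hcore' : β * (L*L + β*L) ≤ 6*p + 2*(β*p) := by nlinarith [mul_pos hβ hp0]
      have hdiv2 : β * (p * (6/β + 2)) = 6*p + 2*(β*p) := by
        field_simp
      nlinarith [hcore', hdiv2, hβ]
    have hβp1 : 0 ≤ 1 - β/p := by
      have : β/p < 1 := (div_lt_one hp0).mpr hβlep
      linarith
    have key2 : p / L * (1 - (6/β + 2) * Real.log L / L) ≤ (n:ℝ) * (1 - β/p) := by
      have step1 : p/L * (1 - (6/β+2)*Real.log L / L) ≤ p/L - 1 - β/L := by
        have e1 : (p/L - 1 - β/L) - p/L*(1 - (6/β+2)*Real.log L/L)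
            = (p*(6/β+2)*Real.log L - L*L - β*L)/(L*L) := by
          field_simp; ring
        have hnum : 0 ≤ p*(6/β+2)*Real.log L - L*L - β*L := by
          have hC : (0:ℝ) ≤ p*(6/β+2) := by positivity
          nlinarith [mul_nonneg hC (by linarith : (0:ℝ) ≤ Real.log L - 1)]
        have : 0 ≤ (p*(6/β+2)*Real.log L - L*L - β*L)/(L*L) :=
          div_nonneg hnum (by positivity)
        linarith [e1 ▸ this]
      have step2 : p/L - 1 - β/L ≤ (p/L - 1)*(1 - β/p) := by
        have e2 : (p/L - 1)*(1 - β/p) = p/L - 1 - β/L + β/p := by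
          field_simp; ring
        have : (0:ℝ) ≤ β/p := by positivity
        linarith
      have step3 : (p/L - 1)*(1 - β/p) ≤ (n:ℝ)*(1 - β/p) :=
        mul_le_mul_of_nonneg_right hnge hβp1
      linarith
    have hfinal : p / (Real.exp 1 * L) * (1 - (6/β + 2) * Real.log L / L) ≤
        (n : ℝ) * (Real.exp (-1:ℝ) * (1 - β / p)) := by
      have hexpinv : Real.exp (-1:ℝ) = (Real.exp 1)⁻¹ := Real.exp_neg 1
      have e3 : p / (Real.exp 1 * L) * (1 - (6/β + 2) * Real.log L / L)
          = (Real.exp 1)⁻¹ * (p / L * (1 - (6/β + 2) * Real.log L / L)) := by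
        rw [mul_comm (Real.exp 1) L, ← div_div]
        ring
      have e4 : (n : ℝ) * (Real.exp (-1:ℝ) * (1 - β / p))
          = (Real.exp 1)⁻¹ * ((n:ℝ) * (1 - β / p)) := by
        rw [hexpinv]; ring
      rw [e3, e4]
      exact mul_le_mul_of_nonneg_left key2 (by positivity)
    calc p / (Real.exp 1 * L) * (1 - (6/β + 2) * Real.log L / L)
        ≤ (n : ℝ) * (Real.exp (-1:ℝ) * (1 - β / p)) := hfinal
      _ ≤ (n : ℝ) * Real.exp ((-β - (n:ℝ) * (Real.log n - Real.log β)) / p) := by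
          apply mul_le_mul_of_nonneg_left _ hn0.le
          exact hexp_lb.trans hmono
      _ ≤ bellFn p β ^ (1 / p) := key
end

section
/- There exist absolute constants 0 < C3 ≤ C4 < ∞ such that for every β > 0 and every real p with 1 ≤ p ≤ 2β one has C3 · β ≤ B(p,β)^{1/p} ≤ C4 · β. -/
open MeasureTheory ProbabilityTheory Real

/-!
Write `w k = β^k / k!`, so that `B(p, β) = e^{-β} ∑ k^p w k` with `∑ w k = e^β` and
`∑ k w k = β e^β`.

Lower bound (Jensen for the Poisson law with mean `β`): the tangent line
`β^p + p β^{p-1} (k - β)` of the convex function `k ↦ k^p` lies below it, and summed against `w`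
it gives `β^p e^β`.

Upper bound: `k/β ≤ e^{k/β - 1}` gives `k^p ≤ β^p e^{-p} (e^{p/β})^k`, hence
`B(p, β) ≤ β^p exp(β (e^{p/β} - 1) - p)`; for `p ≤ 2β` the exponent is at most
`(e² - 1) p`.
-/

open Nat

lemma Real.hasSum_pow_div_factorial (x : ℝ) : HasSum (fun k : ℕ => x ^ k / k !) (exp x) := by
  rw [exp_eq_exp_ℝ]
  exact NormedSpace.expSeries_div_hasSum_exp x

lemma Real.hasSum_mul_pow_div_factorial (x : ℝ) :
    HasSum (fun k : ℕ => k * (x ^ k / k !)) (x * exp x) := by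
  have hshift : (fun k : ℕ => ((k + 1 : ℕ) : ℝ) * (x ^ (k + 1) / (k + 1)!)) =
      fun k => x * (x ^ k / k !) := by
    funext k
    rw [factorial_succ]
    push_cast
    field_simp
    ring
  refine (hasSum_nat_add_iff' 1).mp ?_
  simpa only [Finset.sum_range_one, Nat.cast_zero, zero_mul, sub_zero, hshift]
    using (hasSum_pow_div_factorial x).mul_left x

lemma Real.hasSum_affine_mul_pow_div_factorial (a b x : ℝ) :
    HasSum (fun k : ℕ => (a + b * (k - x)) * (x ^ k / k !)) (a * exp x) := by
  have h := ((hasSum_pow_div_factorial x).mul_left (a - b * x)).add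
    ((hasSum_mul_pow_div_factorial x).mul_left b)
  have hterm : (fun k : ℕ => (a + b * (k - x)) * (x ^ k / k !)) =
      fun k : ℕ => (a - b * x) * (x ^ k / k !) + b * (k * (x ^ k / k !)) := by
    funext k
    ring
  rwa [hterm, show a * exp x = (a - b * x) * exp x + b * (x * exp x) by ring]

lemma Real.exp_sub_one_le_mul_exp (x : ℝ) : exp x - 1 ≤ x * exp x := by
  have h := mul_le_mul_of_nonneg_right (one_sub_le_exp_neg x) (exp_pos x).le
  rw [← exp_add, neg_add_cancel, exp_zero, sub_mul, one_mul] at h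
  linarith

lemma Real.rpow_add_mul_sub_le_rpow {x c p : ℝ} (hx : 0 ≤ x) (hc : 0 < c) (hp : 1 ≤ p) :
    c ^ p + p * c ^ (p - 1) * (x - c) ≤ x ^ p := by
  have h := one_add_mul_self_le_rpow_one_add (s := x / c - 1)
    (by linarith [div_nonneg hx hc.le]) hp
  rw [add_sub_cancel, div_rpow hx hc.le, le_div_iff₀' (rpow_pos_of_pos hc p)] at h
  calc c ^ p + p * c ^ (p - 1) * (x - c) = c ^ p * (1 + p * (x / c - 1)) := by
        rw [rpow_sub_one hc.ne']
        field_simp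
    _ ≤ x ^ p := h

lemma Real.rpow_le_rpow_mul_exp {x c p : ℝ} (hx : 0 ≤ x) (hc : 0 < c) (hp : 0 ≤ p) :
    x ^ p ≤ c ^ p * exp (p * (x / c - 1)) := by
  have h : x / c ≤ exp (x / c - 1) := by linarith [add_one_le_exp (x / c - 1)]
  calc x ^ p = c ^ p * (x / c) ^ p := by
        rw [div_rpow hx hc.le, mul_div_cancel₀ _ (rpow_pos_of_pos hc p).ne']
    _ ≤ c ^ p * exp (x / c - 1) ^ p := by gcongr
    _ = c ^ p * exp (p * (x / c - 1)) := by rw [← exp_mul, mul_comm (x / c - 1)]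

lemma bellTerm_le {β p : ℝ} (hβ : 0 < β) (hp : 0 ≤ p) (k : ℕ) :
    (k : ℝ) ^ p * β ^ k / k ! ≤ β ^ p * exp (-p) * ((β * exp (p / β)) ^ k / k !) := by
  have hk := rpow_le_rpow_mul_exp (Nat.cast_nonneg k) hβ hp
  calc (k : ℝ) ^ p * β ^ k / k ! ≤ β ^ p * exp (p * (k / β - 1)) * β ^ k / k ! := by gcongr
    _ = β ^ p * exp (-p) * ((β * exp (p / β)) ^ k / k !) := by
        rw [mul_pow, ← exp_nat_mul, show p * (k / β - 1) = -p + k * (p / β) by ring, exp_add]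
        ring

lemma summable_bellTerm {β p : ℝ} (hβ : 0 < β) (hp : 0 ≤ p) :
    Summable (fun k : ℕ => (k : ℝ) ^ p * β ^ k / k !) :=
  .of_nonneg_of_le (fun k => by positivity) (bellTerm_le hβ hp)
    ((hasSum_pow_div_factorial _).summable.mul_left _)

lemma rpow_le_bellFn {β p : ℝ} (hβ : 0 < β) (hp : 1 ≤ p) : β ^ p ≤ bellFn p β := by
  have hsum : β ^ p * exp β ≤ ∑' k : ℕ, (k : ℝ) ^ p * β ^ k / k ! := by
    refine hasSum_le (fun k => ?_) (hasSum_affine_mul_pow_div_factorial _ (p * β ^ (p - 1)) β)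
      (summable_bellTerm hβ (by linarith)).hasSum
    rw [mul_div_assoc]
    gcongr
    exact rpow_add_mul_sub_le_rpow (Nat.cast_nonneg k) hβ hp
  calc β ^ p = exp (-β) * (β ^ p * exp β) := by
        rw [mul_left_comm, ← exp_add, neg_add_cancel, exp_zero, mul_one]
    _ ≤ bellFn p β := by unfold bellFn; gcongr

lemma bellFn_le {β p : ℝ} (hβ : 0 < β) (hp : 0 ≤ p) :
    bellFn p β ≤ β ^ p * exp (β * (exp (p / β) - 1) - p) := by
  have hsum := ((hasSum_pow_div_factorial (β * exp (p / β))).mul_left (β ^ p * exp (-p)))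
  calc bellFn p β ≤ exp (-β) * (β ^ p * exp (-p) * exp (β * exp (p / β))) := by
        unfold bellFn
        gcongr
        exact hasSum_le (bellTerm_le hβ hp) (summable_bellTerm hβ hp).hasSum hsum
    _ = β ^ p * exp (β * (exp (p / β) - 1) - p) := by
        rw [mul_left_comm, mul_assoc, ← exp_add, ← exp_add]
        ring_nf

lemma bellFn_le_of_le_two_mul {β p : ℝ} (hβ : 0 < β) (hp : 0 ≤ p) (hpβ : p ≤ 2 * β) :
    bellFn p β ≤ (exp (exp 2 - 1) * β) ^ p := by
  have hexp : β * (exp (p / β) - 1) ≤ p * exp 2 :=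
    calc β * (exp (p / β) - 1) ≤ β * (p / β * exp (p / β)) := by
          gcongr
          exact exp_sub_one_le_mul_exp _
      _ = p * exp (p / β) := by field_simp
      _ ≤ p * exp 2 := by
          gcongr
          rwa [div_le_iff₀ hβ]
  calc bellFn p β ≤ β ^ p * exp (β * (exp (p / β) - 1) - p) := bellFn_le hβ hp
    _ ≤ β ^ p * exp (p * (exp 2 - 1)) := by gcongr; linarith
    _ = (exp (exp 2 - 1) * β) ^ p := by
        rw [mul_rpow (exp_pos _).le hβ.le, ← exp_mul, mul_comm p, mul_comm]

/-- There are absolute constants `0 < C3 ≤ C4 < ∞` such that for every `β > 0` and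
every real `p` with `1 ≤ p ≤ 2β`, `C3 β ≤ B(p,β)^{1/p} ≤ C4 β`. -/
theorem stmt_7 :
    ∃ C3 C4 : ℝ, 0 < C3 ∧ C3 ≤ C4 ∧
      ∀ β p : ℝ, 0 < β → 1 ≤ p → p ≤ 2 * β →
        C3 * β ≤ bellFn p β ^ (1 / p) ∧ bellFn p β ^ (1 / p) ≤ C4 * β := by
  refine ⟨1, exp (exp 2 - 1), one_pos, one_le_exp (by linarith [one_le_exp zero_le_two]), ?_⟩
  intro β p hβ hp hpβ
  have hp0 : 0 < p := by linarith
  have hB : 0 ≤ bellFn p β := (rpow_pos_of_pos hβ p).le.trans (rpow_le_bellFn hβ hp)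
  rw [one_mul, one_div]
  constructor
  · exact (le_rpow_inv_iff_of_pos hβ.le hB hp0).mpr (rpow_le_bellFn hβ hp)
  · exact (rpow_inv_le_iff_of_pos hB (by positivity) hp0).mpr
      (bellFn_le_of_le_two_mul hβ hp0.le hpβ)
end

section
/- Let β > 0 and C > 0, and let X be a random variable such that E|X|^p ≤ exp(C·p^{β+1}) for every real p ≥ 1. Then there exists a constant C1 > 0, depending only on C and β, such that for every y ≥ exp(C(β+1)) one has P(|X| ≥ y) ≤ exp( −C1 · (ln y)^{1+1/β} ). -/
open MeasureTheory ProbabilityTheory Real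

/-- If `E|X|^p ≤ exp(C p^{β+1})` for all real `p ≥ 1` (i.e. `X` lies in the Grand
Lebesgue space generated by `ψ(p) = exp(C p^β)`), then there is `C1 > 0`, depending
only on `C` and `β`, with `P(|X| ≥ y) ≤ exp(-C1 (ln y)^{1+1/β})` for all
`y ≥ exp(C(β+1))`. -/
theorem stmt_18 {Ω : Type*} [MeasurableSpace Ω] (P : Measure Ω) [IsProbabilityMeasure P]
    (β C : ℝ) (hβ : 0 < β) (hC : 0 < C)
    (X : Ω → ℝ) (hXm : Measurable X)
    (hint : ∀ p : ℝ, 1 ≤ p → Integrable (fun ω => |X ω| ^ p) P)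
    (hmom : ∀ p : ℝ, 1 ≤ p → ∫ ω, |X ω| ^ p ∂P ≤ Real.exp (C * p ^ (β + 1))) :
    ∃ C1 : ℝ, 0 < C1 ∧ ∀ y : ℝ, Real.exp (C * (β + 1)) ≤ y →
      P {ω | y ≤ |X ω|} ≤
        ENNReal.ofReal (Real.exp (-C1 * Real.log y ^ (1 + 1 / β))) := by
  have hβ1 : (0:ℝ) < β + 1 := by linarith
  have hB : (0:ℝ) < C * (β + 1) := by positivity
  set B : ℝ := C * (β + 1) with hBdef
  refine ⟨β / (β + 1) * B ^ (-(1/β)), by positivity, fun y hy => ?_⟩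
  have hy0 : 0 < y := lt_of_lt_of_le (exp_pos _) hy
  set L : ℝ := Real.log y with hLdef
  have hL : B ≤ L := by
    have := Real.log_le_log (exp_pos _) hy
    rwa [Real.log_exp] at this
  have hL0 : 0 < L := lt_of_lt_of_le hB hL
  set A : ℝ := L / B with hAdef
  have hA1 : 1 ≤ A := (one_le_div hB).2 hL
  have hA0 : 0 < A := lt_of_lt_of_le one_pos hA1
  set p : ℝ := A ^ (1/β) with hpdef
  have hp1 : 1 ≤ p := Real.one_le_rpow hA1 (by positivity)
  have hp0 : 0 < p := lt_of_lt_of_le one_pos hp1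
  -- p^β = A
  have hpβ : p ^ β = A := by
    rw [hpdef, ← Real.rpow_mul hA0.le, one_div, inv_mul_cancel₀ hβ.ne', Real.rpow_one]
  -- key exponent identity
  have hexp : C * p ^ (β + 1) - p * L = -(β / (β + 1) * B ^ (-(1/β))) * L ^ (1 + 1/β) := by
    have h1 : p ^ (β + 1) = A * p := by
      rw [Real.rpow_add hp0, hpβ, Real.rpow_one]
    have h2 : p = L ^ (1/β) * B ^ (-(1/β)) := by
      rw [hpdef, hAdef, div_eq_mul_inv, Real.mul_rpow hL0.le (by positivity),
        ← Real.rpow_neg_one B, ← Real.rpow_mul hB.le]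
      ring_nf
    have h3 : L ^ (1 + 1/β) = L ^ (1/β) * L := by
      rw [Real.rpow_add hL0, Real.rpow_one]; ring
    rw [h1, hAdef, h2, h3]
    field_simp
    ring
  -- Markov
  have hsub : {ω | y ≤ |X ω|} ⊆ {ω | y ^ p ≤ |X ω| ^ p} := by
    intro ω hω
    exact Real.rpow_le_rpow hy0.le hω hp0.le
  have hmarkov := mul_meas_ge_le_integral_of_nonneg
    (μ := P) (f := fun ω => |X ω| ^ p)
    (ae_of_all _ fun ω => Real.rpow_nonneg (abs_nonneg _) _) (hint p hp1) (y ^ p)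
  have hyp : y ^ p = Real.exp (p * L) := by
    rw [hLdef, ← Real.log_rpow hy0, Real.exp_log (Real.rpow_pos_of_pos hy0 _)]
  have hmeas : (P {ω | y ≤ |X ω|}).toReal ≤
      Real.exp (-(β / (β + 1) * B ^ (-(1/β))) * L ^ (1 + 1/β)) := by
    have hmono : (P {ω | y ≤ |X ω|}).toReal ≤ (P {ω | y ^ p ≤ |X ω| ^ p}).toReal := by
      exact ENNReal.toReal_mono (measure_ne_top _ _) (measure_mono hsub)
    have h4 : y ^ p * (P {ω | y ^ p ≤ |X ω| ^ p}).toReal ≤ Real.exp (C * p ^ (β + 1)) :=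
      hmarkov.trans (hmom p hp1)
    have h5 : (P {ω | y ^ p ≤ |X ω| ^ p}).toReal ≤
        Real.exp (C * p ^ (β + 1)) / Real.exp (p * L) := by
      rw [le_div_iff₀ (exp_pos _)]
      calc (P {ω | y ^ p ≤ |X ω| ^ p}).toReal * Real.exp (p * L)
          = y ^ p * (P {ω | y ^ p ≤ |X ω| ^ p}).toReal := by rw [hyp]; ring
        _ ≤ _ := h4
    calc (P {ω | y ≤ |X ω|}).toReal ≤ _ := hmono
      _ ≤ Real.exp (C * p ^ (β + 1)) / Real.exp (p * L) := h5
      _ = Real.exp (C * p ^ (β + 1) - p * L) := by rw [Real.exp_sub]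
      _ = _ := by rw [hexp]
  calc P {ω | y ≤ |X ω|} = ENNReal.ofReal (P {ω | y ≤ |X ω|}).toReal :=
        (ENNReal.ofReal_toReal (measure_ne_top _ _)).symm
    _ ≤ _ := ENNReal.ofReal_le_ofReal hmeas
end

section
/- Let m > 0 and r ∈ ℝ, and let X be a random variable such that (E|X|^p)^{1/p} ≤ p^{1/m} · (ln p)^{-r} for every real p ≥ 2. Then there exist constants K > 0 and y_0 ≥ e, depending only on m and r, such that for every y ≥ y_0 one has P(|X| ≥ y) ≤ exp( −K · y^m · (ln y)^{r m} ). -/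
/-!
Markov's inequality at exponent `p` gives `P(|X| ≥ y) ≤ (ψ(p) / y) ^ p`, where
`ψ(p) = p^{1/m} (ln p)^{-r}`. Take `p = a y^m (ln y)^{rm}`: then `ln p ~ m ln y`, so
`ψ(p) / y = a^{1/m} (ln p / ln y)^{-r} → a^{1/m} m^{-r}`. For `a` small this limit is below
`e⁻¹`, and for large `y` the Markov bound becomes `e^{-p}`.
-/

open MeasureTheory Real Filter Topology

theorem meas_abs_ge_le_div_rpow_of_moment_le {Ω : Type*} [MeasurableSpace Ω] {μ : Measure Ω}
    {X : Ω → ℝ} {p y c : ℝ} (hp : 0 < p) (hy : 0 < y)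
    (hint : Integrable (fun ω => |X ω| ^ p) μ)
    (hmom : (∫ ω, |X ω| ^ p ∂μ) ^ (1 / p) ≤ c) :
    μ {ω | y ≤ |X ω|} ≤ ENNReal.ofReal ((c / y) ^ p) := by
  have hI : 0 ≤ ∫ ω, |X ω| ^ p ∂μ := integral_nonneg fun ω => by positivity
  have hyp : 0 < y ^ p := rpow_pos_of_pos hy p
  have hIc : ∫ ω, |X ω| ^ p ∂μ ≤ c ^ p := by
    have h := rpow_le_rpow (by positivity) hmom hp.le
    rwa [← rpow_mul hI, one_div_mul_cancel hp.ne', rpow_one] at h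
  have hset : {ω | y ≤ |X ω|} =
      {ω | ENNReal.ofReal (y ^ p) ≤ ENNReal.ofReal (|X ω| ^ p)} := by
    ext ω
    rw [Set.mem_ofPred_eq, Set.mem_ofPred_eq, ENNReal.ofReal_le_ofReal_iff (by positivity),
      rpow_le_rpow_iff hy.le (abs_nonneg _) hp]
  calc μ {ω | y ≤ |X ω|}
      ≤ (∫⁻ ω, ENNReal.ofReal (|X ω| ^ p) ∂μ) / ENNReal.ofReal (y ^ p) := by
        rw [hset]
        exact meas_ge_le_lintegral_div hint.aemeasurable.ennreal_ofReal
          (by simpa using hyp) ENNReal.ofReal_ne_top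
    _ = ENNReal.ofReal ((∫ ω, |X ω| ^ p ∂μ) / y ^ p) := by
        rw [← ofReal_integral_eq_lintegral_ofReal hint (ae_of_all _ fun ω => by positivity),
          ENNReal.ofReal_div_of_pos hyp]
    _ ≤ ENNReal.ofReal ((c / y) ^ p) := by
        rw [div_rpow ((rpow_nonneg hI _).trans hmom) hy.le]
        gcongr

theorem meas_abs_ge_le_exp_neg_of_moment_le {Ω : Type*} [MeasurableSpace Ω] {μ : Measure Ω}
    {X : Ω → ℝ} {p y : ℝ} (hp : 0 < p) (hy : 0 < y)
    (hint : Integrable (fun ω => |X ω| ^ p) μ)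
    (hmom : (∫ ω, |X ω| ^ p ∂μ) ^ (1 / p) ≤ exp (-1) * y) :
    μ {ω | y ≤ |X ω|} ≤ ENNReal.ofReal (exp (-p)) := by
  simpa [mul_div_cancel_right₀ _ hy.ne', ← exp_mul] using
    meas_abs_ge_le_div_rpow_of_moment_le hp hy hint hmom

noncomputable def tailExponent (a m r y : ℝ) : ℝ := a * y ^ m * log y ^ (r * m)

section tailExponent

variable {a m : ℝ} (r : ℝ)

theorem log_tailExponent (ha : 0 < a) {y : ℝ} (hy : 1 < y) :
    log (tailExponent a m r y) = log a + m * log y + r * m * log (log y) := by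
  have hy0 : 0 < y := one_pos.trans hy
  have hlog : 0 < log y := log_pos hy
  rw [tailExponent, log_mul (by positivity) (by positivity), log_mul ha.ne' (by positivity),
    log_rpow hy0, log_rpow hlog]

theorem tailExponent_rpow_inv (ha : 0 ≤ a) (hm : 0 < m) {y : ℝ} (hy : 1 ≤ y) :
    tailExponent a m r y ^ (1 / m) = a ^ (1 / m) * y * log y ^ r := by
  have hy0 : 0 < y := one_pos.trans_le hy
  have hlog : 0 ≤ log y := log_nonneg hy
  rw [tailExponent, mul_rpow (by positivity) (by positivity), mul_rpow ha (by positivity),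
    ← rpow_mul hy0.le, ← rpow_mul hlog, mul_one_div_cancel hm.ne', mul_one_div,
    mul_div_cancel_right₀ _ hm.ne', rpow_one]

theorem tendsto_log_tailExponent_div_log (ha : 0 < a) :
    Tendsto (fun y => log (tailExponent a m r y) / log y) atTop (𝓝 m) := by
  have hlim : Tendsto (fun t => log a / t + m + r * m * (log t / t)) atTop
      (𝓝 (0 + m + r * m * 0)) :=
    ((tendsto_const_nhds.div_atTop tendsto_id).add tendsto_const_nhds).add
      (isLittleO_log_id_atTop.tendsto_div_nhds_zero.const_mul _)
  rw [zero_add, mul_zero, add_zero] at hlim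
  refine (hlim.comp tendsto_log_atTop).congr' ?_
  filter_upwards [eventually_gt_atTop 1] with y hy
  have hlog : log y ≠ 0 := (log_pos hy).ne'
  simp only [Function.comp, log_tailExponent r ha hy]
  field_simp

theorem tendsto_tailExponent_atTop (ha : 0 < a) (hm : 0 < m) :
    Tendsto (tailExponent a m r) atTop atTop := by
  have hlog : Tendsto (fun y => log (tailExponent a m r y)) atTop atTop :=
    ((tendsto_log_tailExponent_div_log r ha).pos_mul_atTop hm tendsto_log_atTop).congr' <| by
      filter_upwards [eventually_gt_atTop 1] with y hy
      exact div_mul_cancel₀ _ (log_pos hy).ne'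
  refine (tendsto_exp_atTop.comp hlog).congr' ?_
  filter_upwards [eventually_gt_atTop 1] with y hy
  have hlog : 0 < log y := log_pos hy
  exact exp_log (by unfold tailExponent; positivity)

theorem tendsto_tailExponent_rpow_mul_log_rpow_div (ha : 0 < a) (hm : 0 < m) :
    Tendsto (fun y => tailExponent a m r y ^ (1 / m) * log (tailExponent a m r y) ^ (-r) / y)
      atTop (𝓝 (a ^ (1 / m) * m ^ (-r))) := by
  refine (((tendsto_log_tailExponent_div_log r ha).rpow_const (Or.inl hm.ne')).const_mul
    (a ^ (1 / m))).congr' ?_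
  filter_upwards [eventually_gt_atTop 1,
    (tendsto_tailExponent_atTop r ha hm).eventually_gt_atTop 1] with y hy hp
  rw [tailExponent_rpow_inv r ha.le hm hy.le, div_rpow (log_pos hp).le (log_pos hy).le,
    rpow_neg (log_pos hy).le]
  field_simp

end tailExponent

theorem stmt_19_general {Ω : Type*} [MeasurableSpace Ω] (P : Measure Ω)
    (m : ℝ) (hm : 0 < m) (r : ℝ)
    (X : Ω → ℝ)
    (hint : ∀ p : ℝ, 2 ≤ p → Integrable (fun ω => |X ω| ^ p) P)
    (hmom : ∀ p : ℝ, 2 ≤ p →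
      (∫ ω, |X ω| ^ p ∂P) ^ (1 / p) ≤ p ^ (1 / m) * Real.log p ^ (-r)) :
    ∃ K y₀ : ℝ, 0 < K ∧ Real.exp 1 ≤ y₀ ∧ ∀ y : ℝ, y₀ ≤ y →
      P {ω | y ≤ |X ω|} ≤
        ENNReal.ofReal (Real.exp (-K * y ^ m * Real.log y ^ (r * m))) := by
  set a : ℝ := (m ^ r * exp (-1) / 2) ^ m
  have ha : 0 < a := by positivity
  have hlim : a ^ (1 / m) * m ^ (-r) < exp (-1) := by
    rw [one_div, rpow_rpow_inv (by positivity) hm.ne', div_mul_eq_mul_div, mul_right_comm,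
      ← rpow_add hm, add_neg_cancel, rpow_zero, one_mul]
    linarith [exp_pos (-1)]
  obtain ⟨y₁, hy₁⟩ := eventually_atTop.1 <|
    ((tendsto_tailExponent_atTop r ha hm).eventually_ge_atTop 2).and <|
      ((tendsto_tailExponent_rpow_mul_log_rpow_div r ha hm).eventually_lt_const hlim).and <|
        eventually_gt_atTop 0
  refine ⟨a, max y₁ (exp 1), ha, le_max_right _ _, fun y hy => ?_⟩
  obtain ⟨hp2, hψ, hy0⟩ := hy₁ y (le_of_max_le_left hy)
  have := meas_abs_ge_le_exp_neg_of_moment_le (by linarith) hy0 (hint _ hp2)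
    ((hmom _ hp2).trans ((div_lt_iff₀ hy0).1 hψ).le)
  simpa only [tailExponent, neg_mul] using this

/-- If `(E|X|^p)^{1/p} ≤ p^{1/m} (ln p)^{-r}` for all real `p ≥ 2` (i.e. `X` lies in the
Grand Lebesgue space generated by `ψ_{m,r}(p) = p^{1/m} (ln p)^{-r}`), then there are
`K > 0` and `y₀ ≥ e`, depending only on `m` and `r`, with
`P(|X| ≥ y) ≤ exp(-K y^m (ln y)^{rm})` for all `y ≥ y₀`. -/
theorem stmt_19 {Ω : Type*} [MeasurableSpace Ω] (P : Measure Ω) [IsProbabilityMeasure P]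
    (m : ℝ) (hm : 0 < m) (r : ℝ)
    (X : Ω → ℝ) (hXm : Measurable X)
    (hint : ∀ p : ℝ, 2 ≤ p → Integrable (fun ω => |X ω| ^ p) P)
    (hmom : ∀ p : ℝ, 2 ≤ p →
      (∫ ω, |X ω| ^ p ∂P) ^ (1 / p) ≤ p ^ (1 / m) * Real.log p ^ (-r)) :
    ∃ K y₀ : ℝ, 0 < K ∧ Real.exp 1 ≤ y₀ ∧ ∀ y : ℝ, y₀ ≤ y →
      P {ω | y ≤ |X ω|} ≤
        ENNReal.ofReal (Real.exp (-K * y ^ m * Real.log y ^ (r * m))) :=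
  stmt_19_general P m hm r X hint hmom
end
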